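/- Let n be a natural number and let t, τ : Fin n → ℝ be nondecreasing functions. Then for every permutation π of Fin n, ∑_{i} |τ(i) − t(i)| ≤ ∑_{i} |τ(π(i)) − t(i)|. In other words, among all bijective matchings between the sorted arrival times t and the sorted matching-point times τ, the order-preserving (identity) matching minimizes the total absolute deviation. -/

import Mathlib

/-!
Swapping the partners of two crossed pairs never increases the cost, because
`(a, b) ↦ |a - b|` satisfies the Monge (submodularity) inequality. Starting from any
permutation, repeatedly uncross at the least point it moves: each such swap fixes one more
point, so the process reaches the identity without ever increasing the total cost.
-/

open Finset Equiv

def IsMonge {α β M : Type*} [Preorder α] [Preorder β] [Add M] [LE M] (c : α → β → M) : Prop :=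
  ∀ ⦃a a' : α⦄, a ≤ a' → ∀ ⦃b b' : β⦄, b ≤ b' → c a b + c a' b' ≤ c a b' + c a' b

theorem isMonge_abs_sub : IsMonge (fun a b : ℝ => |a - b|) := by
  intro a a' _ b b' _
  rcases abs_cases (a - b) with ⟨_, _⟩ | ⟨_, _⟩ <;>
  rcases abs_cases (a' - b') with ⟨_, _⟩ | ⟨_, _⟩ <;>
  rcases abs_cases (a - b') with ⟨_, _⟩ | ⟨_, _⟩ <;>
  rcases abs_cases (a' - b) with ⟨_, _⟩ | ⟨_, _⟩ <;>
  linarith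

section Monge

variable {ι α β M : Type*} [Fintype ι] [LinearOrder ι] [Preorder α] [Preorder β]
  [AddCommMonoid M] [PartialOrder M] [IsOrderedAddMonoid M]
  {c : α → β → M} {τ : ι → α} {t : ι → β}

theorem IsMonge.sum_mul_swap_le (hc : IsMonge c) (hτ : Monotone τ) (ht : Monotone t)
    (π : Perm ι) {i j : ι} (hij : i ≤ j) (hπ : π j ≤ π i) :
    ∑ k, c (τ ((π * swap i j) k)) (t k) ≤ ∑ k, c (τ (π k)) (t k) := by
  rcases eq_or_ne i j with rfl | hne
  · simp
  have hrest : ∀ k ∈ ({i, j} : Finset ι)ᶜ,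
      c (τ ((π * swap i j) k)) (t k) = c (τ (π k)) (t k) := by
    intro k hk
    simp only [mem_compl, mem_insert, mem_singleton, not_or] at hk
    rw [Perm.mul_apply, swap_apply_of_ne_of_ne hk.1 hk.2]
  have hpair : c (τ (π j)) (t i) + c (τ (π i)) (t j) ≤ c (τ (π i)) (t i) + c (τ (π j)) (t j) := by
    simpa only [add_comm] using hc (hτ hπ) (ht hij)
  rw [← sum_compl_add_sum {i, j}, ← sum_compl_add_sum {i, j}, sum_congr rfl hrest,
    sum_pair hne, sum_pair hne]
  simpa only [Perm.mul_apply, swap_apply_left, swap_apply_right] using add_le_add le_rfl hpair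

theorem IsMonge.sum_le_sum_comp_perm (hc : IsMonge c) (hτ : Monotone τ) (ht : Monotone t)
    (π : Perm ι) : ∑ k, c (τ k) (t k) ≤ ∑ k, c (τ (π k)) (t k) := by
  induction hπ : #π.support using Nat.strong_induction_on generalizing π with
  | _ m ih =>
    rcases π.support.eq_empty_or_nonempty with hsupp | hsupp
    · simp [Perm.support_eq_empty_iff.mp hsupp]
    subst hπ
    set i := π.support.min' hsupp
    have hi : i ∈ π.support := min'_mem _ _
    have hmoved : π i ≠ i := Perm.mem_support.mp hi
    have hi_le_image : i ≤ π i := min'_le _ _ (Perm.apply_mem_support.mpr hi)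
    have hi_le_preimage : i ≤ π⁻¹ i :=
      min'_le _ _ (Perm.apply_mem_support.mp (by simpa using hi))
    have hswap : swap i (π i) * π = π * swap i (π⁻¹ i) := by
      rw [swap_mul_eq_mul_swap, Perm.inv_eq_iff_eq.mpr rfl, swap_comm]
    calc ∑ k, c (τ k) (t k) ≤ ∑ k, c (τ ((swap i (π i) * π) k)) (t k) :=
          ih _ (Perm.card_support_swap_mul hmoved) _ rfl
      _ ≤ ∑ k, c (τ (π k)) (t k) :=
          hswap ▸ hc.sum_mul_swap_le hτ ht π hi_le_preimage (by simpa using hi_le_image)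

end Monge

/-- For nondecreasing `t, τ : Fin n → ℝ`, the identity
(order-preserving) matching minimizes the total absolute deviation among all
bijective matchings given by permutations `π` of `Fin n`. -/
theorem orderPreserving_matching_optimal (n : ℕ) (t τ : Fin n → ℝ)
    (ht : Monotone t) (hτ : Monotone τ) (π : Equiv.Perm (Fin n)) :
    ∑ i : Fin n, |τ i - t i| ≤ ∑ i : Fin n, |τ (π i) - t i| :=
  isMonge_abs_sub.sum_le_sum_comp_perm hτ ht π
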